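/- Let F : ℝ^n → ℝ^m be continuously differentiable, B a symmetric positive definite n×n real matrix, x ∈ ℝ^n, and 𝓛 ⊆ {1,…,m}. Suppose F_i is affine (i.e., ∇F_i is constant) for i ∈ 𝓛, and for i ∉ 𝓛, F_i is L_i-smooth and μ_i-strongly convex relative to ‖·‖_B with 0 < μ_i ≤ L_i. Let α_i > 0 for i ∈ 𝓛 and μ_i ≤ α_i ≤ L_i for i ∉ 𝓛, let d ≠ 0 be the unique minimizer over ℝ^n of d ↦ max_{i∈{1,…,m}} ⟨∇F_i(x), d⟩/α_i + (1/2)‖d‖_B², and let σ, γ ∈ (0,1). Suppose t ∈ (0,1] satisfies the Armijo condition at x in direction d, and either t = 1 or there exists an index i with F_i(x + (t/γ) d) − F_i(x) > σ (t/γ) ⟨∇F_i(x), d⟩. Then t ≥ min{1, 2γ(1−σ)·min_{i∉𝓛} μ_i/L_i}. -/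

import Mathlib

/-!
Testing the optimality of `d` against the directions `s • d`, `s ≥ 0`, shows that the value
`max_i ⟪∇F_i x, d⟫ / α_i` equals `-‖d‖_B²`, so `⟪∇F_i x, d⟫ ≤ -α_i ‖d‖_B²` for every `i`.
If the Armijo test fails at `t / γ` for the index `i`, then `i` is not affine, since an affine
objective decreases exactly by `(t / γ) ⟪∇F_i x, d⟫ ≤ σ (t / γ) ⟪∇F_i x, d⟫`. For a smooth `i` the
upper quadratic bound gives `σ τ c < τ c + L_i τ² ‖d‖_B² / 2` with `τ = t / γ` and
`c ≤ -μ_i ‖d‖_B²`, hence `τ > 2 (1 - σ) μ_i / L_i`.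
-/

open scoped RealInnerProductSpace

/-- Maximum of a function over the (nonempty) finite index type `Fin m`. -/
noncomputable def fmax {m : ℕ} [NeZero m] (f : Fin m → ℝ) : ℝ :=
  Finset.univ.sup' Finset.univ_nonempty f

theorem le_fmax {m : ℕ} [NeZero m] (f : Fin m → ℝ) (i : Fin m) : f i ≤ fmax f :=
  Finset.le_sup' f (Finset.mem_univ i)

theorem fmax_const_mul {m : ℕ} [NeZero m] {s : ℝ} (hs : 0 ≤ s) (f : Fin m → ℝ) :
    fmax (fun i => s * f i) = s * fmax f :=
  (Finset.mul₀_sup' hs f _ _).symm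

theorem eq_neg_of_forall_le_mul_add_sq {a b : ℝ} (hb : 0 ≤ b)
    (h : ∀ s : ℝ, 0 ≤ s → a + b / 2 ≤ s * a + s ^ 2 * b / 2) : a = -b := by
  have ha : a + b / 2 ≤ 0 := by simpa using h 0 le_rfl
  rcases hb.eq_or_lt with rfl | hb
  · linarith [h 2 zero_le_two]
  · have hs := h (-a / b) (div_nonneg (by linarith) hb.le)
    have hval : -a / b * a + (-a / b) ^ 2 * b / 2 = -(a ^ 2 / b) / 2 := by
      field_simp
      ring
    rw [hval, le_div_iff₀ two_pos, le_neg, div_le_iff₀ hb] at hs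
    nlinarith [sq_nonneg (a + b)]

section Subproblem

variable {E : Type*} [NormedAddCommGroup E] [InnerProductSpace ℝ E] {m : ℕ} [NeZero m]

noncomputable def subproblemObjective (g : Fin m → E) (α : Fin m → ℝ) (B : E →ₗ[ℝ] E)
    (e : E) : ℝ :=
  (fmax fun i => ⟪g i, e⟫ / α i) + ⟪e, B e⟫ / 2

theorem fmax_eq_neg_of_subproblem_min {g : Fin m → E} {α : Fin m → ℝ} {B : E →ₗ[ℝ] E} {d : E}
    (hB : 0 ≤ ⟪d, B d⟫)
    (hmin : ∀ e, subproblemObjective g α B d ≤ subproblemObjective g α B e) :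
    (fmax fun i => ⟪g i, d⟫ / α i) = -⟪d, B d⟫ := by
  refine eq_neg_of_forall_le_mul_add_sq hB fun s hs => ?_
  have h := hmin (s • d)
  simp only [subproblemObjective, real_inner_smul_right, mul_div_assoc, fmax_const_mul hs,
    map_smul, real_inner_smul_left] at h
  linarith

theorem inner_le_of_subproblem_min {g : Fin m → E} {α : Fin m → ℝ} {B : E →ₗ[ℝ] E} {d : E}
    (hB : 0 ≤ ⟪d, B d⟫)
    (hmin : ∀ e, subproblemObjective g α B d ≤ subproblemObjective g α B e)
    {i : Fin m} (hα : 0 < α i) : ⟪g i, d⟫ ≤ -(α i * ⟪d, B d⟫) := by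
  have h := le_fmax (fun i => ⟪g i, d⟫ / α i) i
  rw [fmax_eq_neg_of_subproblem_min hB hmin, div_le_iff₀ hα] at h
  linarith

end Subproblem

section Stepsize

variable {E : Type*} [NormedAddCommGroup E] [InnerProductSpace ℝ E] [CompleteSpace E]

theorem add_eq_add_inner_of_gradient_const {f : E → ℝ}
    (hf : Differentiable ℝ f) (hconst : ∀ y z, gradient f y = gradient f z) (x v : E) :
    f (x + v) = f x + ⟪gradient f x, v⟫ := by
  have hderiv : ∀ y, HasFDerivAt (fun y => f y - ⟪gradient f x, y⟫) (0 : E →L[ℝ] ℝ) y := by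
    intro y
    have h := (hf y).hasGradientAt.hasFDerivAt.sub (innerSL ℝ (gradient f x)).hasFDerivAt
    exact h.congr_fderiv (by ext v; simp [hconst y x])
  have h := is_const_of_fderiv_eq_zero (fun y => (hderiv y).differentiableAt)
    (fun y => (hderiv y).fderiv) (x + v) x
  rw [inner_add_right] at h
  linarith

theorem armijo_of_gradient_const {f : E → ℝ} (hf : Differentiable ℝ f)
    (hconst : ∀ y z, gradient f y = gradient f z) {x d : E} {σ τ : ℝ} (hσ : σ ≤ 1)
    (hτ : 0 ≤ τ) (hdesc : ⟪gradient f x, d⟫ ≤ 0) :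
    f (x + τ • d) - f x ≤ σ * τ * ⟪gradient f x, d⟫ := by
  rw [add_eq_add_inner_of_gradient_const hf hconst, real_inner_smul_right]
  nlinarith [mul_nonneg (sub_nonneg.2 hσ) hτ]

theorem lt_of_armijo_fails_of_smooth {f : E → ℝ} {B : E →ₗ[ℝ] E} {L μ σ τ : ℝ} {x d : E}
    (hsmooth : ∀ y z, f z ≤ f y + ⟪gradient f y, z - y⟫ + L / 2 * ⟪z - y, B (z - y)⟫)
    (hL : 0 < L) (hσ : σ < 1) (hτ : 0 < τ) (hB : 0 ≤ ⟪d, B d⟫)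
    (hdesc : ⟪gradient f x, d⟫ ≤ -(μ * ⟪d, B d⟫))
    (hfail : σ * τ * ⟪gradient f x, d⟫ < f (x + τ • d) - f x) :
    2 * (1 - σ) * (μ / L) < τ := by
  have hup := hsmooth x (x + τ • d)
  rw [add_sub_cancel_left, real_inner_smul_right, map_smul, real_inner_smul_left,
    real_inner_smul_right] at hup
  have hq : (1 - σ) * μ * τ * ⟪d, B d⟫ < L / 2 * τ ^ 2 * ⟪d, B d⟫ := by
    nlinarith [mul_le_mul_of_nonneg_left hdesc (mul_nonneg (sub_nonneg.2 hσ.le) hτ.le)]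
  have h := lt_of_mul_lt_mul_right hq hB
  rw [mul_div_assoc', div_lt_iff₀ hL]
  nlinarith

end Stepsize

theorem stmt18_general {n m : ℕ} [NeZero m] (F : Fin m → EuclideanSpace ℝ (Fin n) → ℝ)
    (hF : ∀ i, ContDiff ℝ 1 (F i))
    (B : EuclideanSpace ℝ (Fin n) →ₗ[ℝ] EuclideanSpace ℝ (Fin n))
    (hposdef : ∀ u : EuclideanSpace ℝ (Fin n), u ≠ 0 → 0 < ⟪u, B u⟫)
    (x : EuclideanSpace ℝ (Fin n))
    (ls : Finset (Fin m)) (hlsc : lsᶜ.Nonempty)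
    (haff : ∀ i ∈ ls, ∀ y z : EuclideanSpace ℝ (Fin n),
      gradient (F i) y = gradient (F i) z)
    (L μ : Fin m → ℝ) (hμ : ∀ i ∉ ls, 0 < μ i)
    (hsmooth : ∀ i ∉ ls, ∀ y z : EuclideanSpace ℝ (Fin n),
      F i z ≤ F i y + ⟪gradient (F i) y, z - y⟫ + L i / 2 * ⟪z - y, B (z - y)⟫)
    (α : Fin m → ℝ) (hα1 : ∀ i ∈ ls, 0 < α i)
    (hα2 : ∀ i ∉ ls, μ i ≤ α i ∧ α i ≤ L i)
    (d : EuclideanSpace ℝ (Fin n))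
    (hdmin : ∀ e : EuclideanSpace ℝ (Fin n),
      (fmax fun i => ⟪gradient (F i) x, d⟫ / α i) + ⟪d, B d⟫ / 2 ≤
        (fmax fun i => ⟪gradient (F i) x, e⟫ / α i) + ⟪e, B e⟫ / 2)
    (σ γ : ℝ) (hσ : σ ∈ Set.Ioo (0 : ℝ) 1) (hγ : γ ∈ Set.Ioo (0 : ℝ) 1)
    (t : ℝ) (ht : t ∈ Set.Ioc (0 : ℝ) 1)
    (hmaximal : t = 1 ∨ ∃ i, σ * (t / γ) * ⟪gradient (F i) x, d⟫ <
      F i (x + (t / γ) • d) - F i x) :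
    min 1 (2 * γ * (1 - σ) * lsᶜ.inf' hlsc (fun i => μ i / L i)) ≤ t := by
  rcases hmaximal with rfl | ⟨i, hfail⟩
  · exact min_le_left _ _
  have hB : 0 ≤ ⟪d, B d⟫ :=
    (eq_or_ne d 0).elim (fun hd => by simp [hd]) fun hd => (hposdef d hd).le
  have hγ0 : 0 < γ := hγ.1
  have hτ : 0 < t / γ := div_pos ht.1 hγ0
  by_cases hi : i ∈ ls
  · have hdesc := inner_le_of_subproblem_min hB hdmin (hα1 i hi)
    exact absurd hfail (not_lt.2 (armijo_of_gradient_const ((hF i).differentiable one_ne_zero)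
      (haff i hi) hσ.2.le hτ.le (hdesc.trans (neg_nonpos.2 (mul_nonneg (hα1 i hi).le hB)))))
  · obtain ⟨hμα, hαL⟩ := hα2 i hi
    have hdesc := (inner_le_of_subproblem_min hB hdmin ((hμ i hi).trans_le hμα)).trans
      (neg_le_neg (mul_le_mul_of_nonneg_right hμα hB))
    have hstep := lt_of_armijo_fails_of_smooth (hsmooth i hi)
      ((hμ i hi).trans_le (hμα.trans hαL)) hσ.2 hτ hB hdesc hfail
    have hinf : lsᶜ.inf' hlsc (fun i => μ i / L i) ≤ μ i / L i :=
      Finset.inf'_le _ (Finset.mem_compl.2 hi)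
    calc min 1 (2 * γ * (1 - σ) * lsᶜ.inf' hlsc (fun i => μ i / L i))
        ≤ 2 * γ * (1 - σ) * lsᶜ.inf' hlsc (fun i => μ i / L i) := min_le_right _ _
      _ = γ * (2 * (1 - σ) * lsᶜ.inf' hlsc (fun i => μ i / L i)) := by ring
      _ ≤ γ * (t / γ) := by
          gcongr
          exact (mul_le_mul_of_nonneg_left hinf (by linarith [hσ.2])).trans hstep.le
      _ = t := mul_div_cancel₀ t hγ0.ne'

/-- Stepsize lower bound in the presence of affine objectives: if the
objectives in `𝓛` are affine (constant gradient) and the remaining ones are `L_i`-smooth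
and `μ_i`-strongly convex relative to `‖·‖_B`, `d ≠ 0` minimizes the subproblem,
`t ∈ (0,1]` satisfies the Armijo condition and either `t = 1` or the Armijo condition
fails at stepsize `t/γ` for some index, then `t ≥ min{1, 2γ(1−σ)·min_{i∉𝓛} μ_i/L_i}`. -/
theorem stmt18 {n m : ℕ} [NeZero m] (F : Fin m → EuclideanSpace ℝ (Fin n) → ℝ)
    (hF : ∀ i, ContDiff ℝ 1 (F i))
    (B : EuclideanSpace ℝ (Fin n) →ₗ[ℝ] EuclideanSpace ℝ (Fin n))
    (hsym : ∀ u v : EuclideanSpace ℝ (Fin n), ⟪B u, v⟫ = ⟪u, B v⟫)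
    (hposdef : ∀ u : EuclideanSpace ℝ (Fin n), u ≠ 0 → 0 < ⟪u, B u⟫)
    (x : EuclideanSpace ℝ (Fin n))
    (ls : Finset (Fin m)) (hlsc : lsᶜ.Nonempty)
    (haff : ∀ i ∈ ls, ∀ y z : EuclideanSpace ℝ (Fin n),
      gradient (F i) y = gradient (F i) z)
    (L μ : Fin m → ℝ) (hμ : ∀ i ∉ ls, 0 < μ i) (hμL : ∀ i ∉ ls, μ i ≤ L i)
    (hsmooth : ∀ i ∉ ls, ∀ y z : EuclideanSpace ℝ (Fin n),
      F i z ≤ F i y + ⟪gradient (F i) y, z - y⟫ + L i / 2 * ⟪z - y, B (z - y)⟫)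
    (hsc : ∀ i ∉ ls, ∀ y z : EuclideanSpace ℝ (Fin n),
      F i y + ⟪gradient (F i) y, z - y⟫ + μ i / 2 * ⟪z - y, B (z - y)⟫ ≤ F i z)
    (α : Fin m → ℝ) (hα1 : ∀ i ∈ ls, 0 < α i)
    (hα2 : ∀ i ∉ ls, μ i ≤ α i ∧ α i ≤ L i)
    (d : EuclideanSpace ℝ (Fin n)) (hd : d ≠ 0)
    (hdmin : ∀ e : EuclideanSpace ℝ (Fin n),
      (fmax fun i => ⟪gradient (F i) x, d⟫ / α i) + ⟪d, B d⟫ / 2 ≤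
        (fmax fun i => ⟪gradient (F i) x, e⟫ / α i) + ⟪e, B e⟫ / 2)
    (σ γ : ℝ) (hσ : σ ∈ Set.Ioo (0 : ℝ) 1) (hγ : γ ∈ Set.Ioo (0 : ℝ) 1)
    (t : ℝ) (ht : t ∈ Set.Ioc (0 : ℝ) 1)
    (harmijo : ∀ i, F i (x + t • d) - F i x ≤ σ * t * ⟪gradient (F i) x, d⟫)
    (hmaximal : t = 1 ∨ ∃ i, σ * (t / γ) * ⟪gradient (F i) x, d⟫ <
      F i (x + (t / γ) • d) - F i x) :
    min 1 (2 * γ * (1 - σ) * lsᶜ.inf' hlsc (fun i => μ i / L i)) ≤ t :=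
  stmt18_general F hF B hposdef x ls hlsc haff L μ hμ hsmooth α hα1 hα2 d hdmin σ γ hσ hγ t ht
    hmaximal
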